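/- Let k be an algebraically closed field with char k ≠ 2. There is no graded isomorphism between the algebras U = k⟨x,y,z⟩/⟨xy − zx, yx − xz, y² + z²⟩ and U' = k⟨x,y,z⟩/⟨xy − zx, yx − xz, x² + y² + z²⟩. -/

import Mathlib

noncomputable section

/-- The free algebra on three generators `x, y, z` (indexed by `Fin 3`). -/
abbrev F3 (k : Type) [Field k] : Type := FreeAlgebra k (Fin 3)

noncomputable def X (k : Type) [Field k] : F3 k := FreeAlgebra.ι k 0
noncomputable def Y (k : Type) [Field k] : F3 k := FreeAlgebra.ι k 1
noncomputable def Z (k : Type) [Field k] : F3 k := FreeAlgebra.ι k 2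

/-- The quotient of the free algebra on `x, y, z` by the two-sided ideal
generated by the set `rels`. -/
abbrev quotAlg (k : Type) [Field k] (rels : Set (F3 k)) : Type :=
  RingQuot (fun a b : F3 k => a ∈ rels ∧ b = 0)

/-- The image of the `i`-th generator in the quotient algebra. -/
noncomputable def gen (k : Type) [Field k] (rels : Set (F3 k)) (i : Fin 3) :
    quotAlg k rels :=
  RingQuot.mkAlgHom k (fun a b : F3 k => a ∈ rels ∧ b = 0) (FreeAlgebra.ι k i)

/-- The `k`-linear span of the images of the generators in the quotient. -/
noncomputable def genSpan (k : Type) [Field k] (rels : Set (F3 k)) :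
    Submodule k (quotAlg k rels) :=
  Submodule.span k (Set.range (gen k rels))

/-- There is a graded isomorphism between the two quotient algebras:
a `k`-algebra isomorphism carrying the span of the generators onto the
span of the generators. -/
def GradedIso (k : Type) [Field k] (r1 r2 : Set (F3 k)) : Prop :=
  ∃ φ : quotAlg k r1 ≃ₐ[k] quotAlg k r2,
    Submodule.map φ.toLinearMap (genSpan k r1) = genSpan k r2

/-- Relations of `U = k⟨x,y,z⟩/⟨xy − zx, yx − xz, y² + z²⟩`. -/
noncomputable def Urel (k : Type) [Field k] : Set (F3 k) :=
  {X k * Y k - Z k * X k, Y k * X k - X k * Z k, Y k ^ 2 + Z k ^ 2}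


/-- Relations of `U' = k⟨x,y,z⟩/⟨xy − zx, yx − xz, x² + y² + z²⟩`. -/
noncomputable def U'rel (k : Type) [Field k] : Set (F3 k) :=
  {X k * Y k - Z k * X k, Y k * X k - X k * Z k, X k ^ 2 + Y k ^ 2 + Z k ^ 2}

/-!
A graded isomorphism `U ≃ U'` is an invertible linear substitution `xᵢ ↦ ∑ⱼ cᵢⱼ xⱼ` carrying the
quadratic relations of `U` into those of `U'`. In the abelianization
`k[x,y,z]/(x(y - z), x² + y² + z²)` of `U'` this says that the symmetric relations `x(y - z)` and
`y² + z²` of `U` are carried into the pencil spanned by `x(y - z)` and `x² + y² + z²`: for their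
Gram matrices `A`, `B`, the congruence `cᵀ (s A + t B) c` lies in the pencil of `A` and `1`. Taking
determinants, the binary cubic `det (s A + t B) = -2 s² t`, which has a repeated factor, becomes
`det c ^ 2` times the cubic `v (v² - 2 u²)` after a linear substitution, and the latter has three
distinct linear factors as soon as `2 ≠ 0`.
-/

open Matrix

section QuotientAlgebra

variable {k : Type} [Field k]

lemma mkAlgHom_eq_zero_of_mem {rels : Set (F3 k)} {r : F3 k} (hr : r ∈ rels) :
    RingQuot.mkAlgHom k (fun a b : F3 k => a ∈ rels ∧ b = 0) r = 0 := by
  simpa using RingQuot.mkAlgHom_rel k (s := fun a b : F3 k => a ∈ rels ∧ b = 0) ⟨hr, rfl⟩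

def quotLift {rels : Set (F3 k)} {A : Type} [Semiring A] [Algebra k A] (f : Fin 3 → A)
    (hf : ∀ r ∈ rels, FreeAlgebra.lift k f r = 0) : quotAlg k rels →ₐ[k] A :=
  RingQuot.liftAlgHom k ⟨FreeAlgebra.lift k f, by rintro a b ⟨ha, rfl⟩; simp [hf a ha]⟩

lemma quotLift_gen {rels : Set (F3 k)} {A : Type} [Semiring A] [Algebra k A] (f : Fin 3 → A)
    (hf : ∀ r ∈ rels, FreeAlgebra.lift k f r = 0) (i : Fin 3) :
    quotLift f hf (gen k rels i) = f i := by
  rw [quotLift, gen, RingQuot.liftAlgHom_mkAlgHom_apply, FreeAlgebra.lift_ι_apply]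

lemma genSpan_eq_range (rels : Set (F3 k)) :
    genSpan k rels = LinearMap.range (Fintype.linearCombination k (gen k rels)) :=
  (Fintype.range_linearCombination k _).symm

lemma exists_coeffMatrix_of_map_genSpan {r₁ r₂ : Set (F3 k)}
    (φ : quotAlg k r₁ ≃ₐ[k] quotAlg k r₂)
    (hφ : Submodule.map φ.toLinearMap (genSpan k r₁) = genSpan k r₂)
    (hinj : Function.Injective (Fintype.linearCombination k (gen k r₂))) :
    ∃ c : Matrix (Fin 3) (Fin 3) k,
      (∀ i, φ (gen k r₁ i) = Fintype.linearCombination k (gen k r₂) (c i)) ∧ c.det ≠ 0 := by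
  have hmem (i : Fin 3) :
      φ (gen k r₁ i) ∈ LinearMap.range (Fintype.linearCombination k (gen k r₂)) := by
    rw [← genSpan_eq_range, ← hφ]
    exact Submodule.mem_map_of_mem (Submodule.subset_span ⟨i, rfl⟩)
  obtain ⟨c, hc⟩ : ∃ c : Matrix (Fin 3) (Fin 3) k,
      ∀ i, Fintype.linearCombination k (gen k r₂) (c i) = φ (gen k r₁ i) :=
    ⟨_, fun i => (hmem i).choose_spec⟩
  have hφ_comb (t : Fin 3 → k) : φ (Fintype.linearCombination k (gen k r₁) t) =
      Fintype.linearCombination k (gen k r₂) (t ᵥ* c) := by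
    rw [vecMul_eq_sum, map_sum]
    simp only [map_smul, hc, Fintype.linearCombination_apply, map_sum]
  have hsurj (j : Fin 3) : ∃ t : Fin 3 → k, t ᵥ* c = Pi.single j 1 := by
    have hj : gen k r₂ j ∈ Submodule.map φ.toLinearMap (genSpan k r₁) :=
      hφ ▸ Submodule.subset_span ⟨j, rfl⟩
    rw [genSpan_eq_range] at hj
    obtain ⟨_, ⟨t, rfl⟩, ht⟩ := hj
    exact ⟨t, hinj (by simpa [hφ_comb] using ht)⟩
  obtain ⟨d, hd⟩ : ∃ d : Matrix (Fin 3) (Fin 3) k, ∀ j, d j ᵥ* c = Pi.single j 1 :=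
    ⟨_, fun j => (hsurj j).choose_spec⟩
  refine ⟨c, fun i => (hc i).symm, det_ne_zero_of_left_inverse (B := d) ?_⟩
  ext j l
  rw [mul_apply, one_apply]
  simpa [vecMul, dotProduct, Pi.single_apply, eq_comm] using congrFun (hd j) l

end QuotientAlgebra

section Relations

variable {k : Type} [Field k]

lemma gen_Urel_zero_mul_one :
    gen k (Urel k) 0 * gen k (Urel k) 1 = gen k (Urel k) 2 * gen k (Urel k) 0 := by
  have := mkAlgHom_eq_zero_of_mem (rels := Urel k) (r := X k * Y k - Z k * X k) (by simp [Urel])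
  simpa [gen, X, Y, Z, sub_eq_zero] using this

lemma gen_Urel_one_sq_add_two_sq : gen k (Urel k) 1 ^ 2 + gen k (Urel k) 2 ^ 2 = 0 := by
  have := mkAlgHom_eq_zero_of_mem (rels := Urel k) (r := Y k ^ 2 + Z k ^ 2) (by simp [Urel])
  simpa [gen, Y, Z] using this

end Relations

/-- The coordinates of `(v₀x + v₁y + v₂z)(w₀x + w₁y + w₂z)` in the basis `y², z², xy, yz`
of the degree-2 part of the abelianization `k[x,y,z]/(x(y - z), x² + y² + z²)` of `U'`. -/
def quadCoords {R : Type*} [CommRing R] (v w : Fin 3 → R) : Fin 4 → R :=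
  ![v 1 * w 1 - v 0 * w 0, v 2 * w 2 - v 0 * w 0, v 0 * (w 1 + w 2) + (v 1 + v 2) * w 0,
    v 1 * w 2 + v 2 * w 1]

section AbelianizationRep

variable {k : Type} [Field k]

/-- Multiplication by `x, y, z` on the degree `≤ 2` part of the abelianization of `U'`,
in the basis `1, x, y, z, y², z², xy = xz, yz`. -/
def abelRep : Fin 3 → Matrix (Fin 8) (Fin 8) k :=
  ![single 1 0 1 - single 4 1 1 - single 5 1 1 + single 6 2 1 + single 6 3 1,
    single 2 0 1 + single 6 1 1 + single 4 2 1 + single 7 3 1,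
    single 3 0 1 + single 6 1 1 + single 7 2 1 + single 5 3 1]

lemma abelRep_rel : ∀ r ∈ U'rel k, FreeAlgebra.lift k (abelRep (k := k)) r = 0 := by
  simp only [U'rel, Set.mem_insert_iff, Set.mem_singleton_iff, forall_eq_or_imp, forall_eq,
    map_sub, map_add, map_mul, map_pow, X, Y, Z, FreeAlgebra.lift_ι_apply]
  refine ⟨?_, ?_, ?_⟩ <;>
    simp only [abelRep, cons_val_zero, cons_val_one, cons_val, pow_two, add_mul, mul_add, sub_mul,
      mul_sub, single_mul_single_same, single_mul_single_of_ne, ne_eq, Fin.reduceEq,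
      not_false_eq_true, mul_one] <;>
    abel

def abelRepLin (v : Fin 3 → k) : Matrix (Fin 8) (Fin 8) k := ∑ i, v i • abelRep i

lemma abelRepLin_injective : Function.Injective (abelRepLin (k := k)) := by
  intro v w h
  funext j
  have := congrFun (congrFun h (j.succ.castLT (by omega))) 0
  fin_cases j <;> simpa [abelRepLin, abelRep, Fin.sum_univ_three, single_apply] using this

lemma abelRepLin_mul_apply (v w : Fin 3 → k) (r : Fin 4) :
    (abelRepLin v * abelRepLin w) (Fin.natAdd 4 r) 0 = quadCoords v w r := by
  fin_cases r <;>
    simp only [abelRepLin, abelRep, quadCoords, Fin.sum_univ_three, Fin.sum_univ_eight, mul_apply,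
      Matrix.add_apply, Matrix.sub_apply, Matrix.smul_apply, single_apply, cons_val_zero,
      cons_val_one, cons_val, Fin.natAdd_eq_addNat, Fin.reduceAddNat, Fin.reduceEq, Fin.isValue,
      and_true, true_and, and_false, false_and, ↓reduceIte, smul_eq_mul, Fin.zero_eta, Fin.mk_one,
      Fin.reduceFinMk] <;>
    ring

def abelHom : quotAlg k (U'rel k) →ₐ[k] Matrix (Fin 8) (Fin 8) k := quotLift abelRep abelRep_rel

local notation "L'" => Fintype.linearCombination k (gen k (U'rel k))

lemma abelHom_linearCombination (v : Fin 3 → k) : abelHom (L' v) = abelRepLin v := by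
  simp [abelHom, Fintype.linearCombination_apply, abelRepLin, quotLift_gen]

lemma linearCombination_gen_U'rel_injective : Function.Injective L' := fun v w h =>
  abelRepLin_injective (by simpa [abelHom_linearCombination] using congrArg abelHom h)

lemma quadCoords_eq_of_mul_eq {a b c d : Fin 3 → k} (h : L' a * L' b = L' c * L' d) :
    quadCoords a b = quadCoords c d := by
  have h' := congrArg abelHom h
  simp only [map_mul, abelHom_linearCombination] at h'
  funext r
  rw [← abelRepLin_mul_apply, h', abelRepLin_mul_apply]

lemma quadCoords_add_eq_zero {a b c d : Fin 3 → k} (h : L' a * L' b + L' c * L' d = 0) :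
    quadCoords a b + quadCoords c d = 0 := by
  have h' := congrArg abelHom h
  simp only [map_add, map_mul, map_zero, abelHom_linearCombination] at h'
  funext r
  rw [Pi.add_apply, Pi.zero_apply, ← abelRepLin_mul_apply, ← abelRepLin_mul_apply,
    ← Matrix.add_apply, h', Matrix.zero_apply]

end AbelianizationRep

section Pencil

variable {R : Type*} [CommRing R]

/-- Gram matrix of `2x(y - z)`. Together with `gramB` it spans the symmetric quadratic relations
of `U`; together with `1` (for `x² + y² + z²`) those of `U'`. -/
def gramA : Matrix (Fin 3) (Fin 3) R := !![0, 1, -1; 1, 0, 0; -1, 0, 0]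

/-- Gram matrix of `y² + z²`. -/
def gramB : Matrix (Fin 3) (Fin 3) R := !![0, 0, 0; 0, 1, 0; 0, 0, 1]

lemma isSymm_gramA : (gramA : Matrix (Fin 3) (Fin 3) R).IsSymm := by
  ext i j; fin_cases i <;> fin_cases j <;> simp [gramA]

lemma isSymm_gramB : (gramB : Matrix (Fin 3) (Fin 3) R).IsSymm := by
  ext i j; fin_cases i <;> fin_cases j <;> simp [gramB]

lemma Matrix.IsSymm.transpose_mul_mul {α n : Type*} [CommSemiring α] [Fintype n]
    {G : Matrix n n α} (hG : G.IsSymm) (c : Matrix n n α) : (cᵀ * G * c).IsSymm := by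
  simp [IsSymm, transpose_mul, hG.eq, Matrix.mul_assoc]

lemma det_smul_gramA_add_smul_one (u v : R) :
    (u • gramA + v • 1 : Matrix (Fin 3) (Fin 3) R).det = v ^ 3 - 2 * u ^ 2 * v := by
  simp only [gramA, det_fin_three, Matrix.add_apply, Matrix.smul_apply, one_apply_eq, one_apply_ne,
    ne_eq, Fin.reduceEq, not_false_eq_true, of_apply, cons_val', cons_val_zero, cons_val_one,
    cons_val, cons_val_fin_one, smul_eq_mul]
  ring

lemma det_smul_gramA_add_smul_gramB (s t : R) :
    (s • gramA + t • gramB : Matrix (Fin 3) (Fin 3) R).det = -2 * s ^ 2 * t := by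
  simp only [gramA, gramB, det_fin_three, Matrix.add_apply, Matrix.smul_apply, of_apply, cons_val',
    cons_val_zero, cons_val_one, cons_val, cons_val_fin_one, smul_eq_mul]
  ring

lemma eq_smul_gramA_add_smul_one {M : Matrix (Fin 3) (Fin 3) R} (hM : M.IsSymm)
    (h11 : M 1 1 = M 0 0) (h22 : M 2 2 = M 0 0) (h02 : M 0 2 = -M 0 1) (h12 : M 1 2 = 0) :
    M = M 0 1 • gramA + M 0 0 • 1 := by
  ext i j
  fin_cases i <;> fin_cases j <;>
    simp [gramA, hM.apply 0 1, hM.apply 0 2, hM.apply 1 2, h11, h22, h02, h12]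

lemma transpose_mul_gramA_mul_mem_pencil {c : Matrix (Fin 3) (Fin 3) R}
    (h : quadCoords (c 0) (c 1) = quadCoords (c 2) (c 0)) :
    ∃ α β : R, cᵀ * gramA * c = α • gramA + β • 1 := by
  obtain ⟨e0, e1, e2, e3⟩ := And.intro (congrFun h 0) <| And.intro (congrFun h 1) <|
    And.intro (congrFun h 2) (congrFun h 3)
  simp only [quadCoords, cons_val_zero, cons_val_one, cons_val] at e0 e1 e2 e3
  refine ⟨_, _, eq_smul_gramA_add_smul_one (isSymm_gramA.transpose_mul_mul c) ?_ ?_ ?_ ?_⟩ <;>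
    simp only [gramA, mul_apply, transpose_apply, Fin.sum_univ_three, of_apply, cons_val',
      cons_val_zero, cons_val_one, cons_val, cons_val_fin_one]
  · linear_combination 2 * e0
  · linear_combination 2 * e1
  · linear_combination e2
  · linear_combination e3

lemma transpose_mul_gramB_mul_mem_pencil [IsDomain R] (h2 : (2 : R) ≠ 0)
    {c : Matrix (Fin 3) (Fin 3) R}
    (h : quadCoords (c 1) (c 1) + quadCoords (c 2) (c 2) = 0) :
    ∃ γ δ : R, cᵀ * gramB * c = γ • gramA + δ • 1 := by
  obtain ⟨e0, e1, e2, e3⟩ := And.intro (congrFun h 0) <| And.intro (congrFun h 1) <|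
    And.intro (congrFun h 2) (congrFun h 3)
  simp only [quadCoords, Pi.add_apply, Pi.zero_apply, cons_val_zero, cons_val_one, cons_val]
    at e0 e1 e2 e3
  refine ⟨_, _, eq_smul_gramA_add_smul_one (isSymm_gramB.transpose_mul_mul c) ?_ ?_ ?_ ?_⟩ <;>
    simp only [gramB, mul_apply, transpose_apply, Fin.sum_univ_three, of_apply, cons_val',
      cons_val_zero, cons_val_one, cons_val, cons_val_fin_one]
  · linear_combination e0
  · linear_combination e1
  · exact mul_left_cancel₀ h2 (by linear_combination e2)
  · exact mul_left_cancel₀ h2 (by linear_combination e3)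

end Pencil

/-- `v (v² - 2u²)` has no repeated linear factor when `2 ≠ 0`, so no linear substitution turns it
into a nonzero multiple of `s² t`. -/
lemma eq_zero_of_cubic_comp_eq {R : Type*} [CommRing R] [IsDomain R] (h2 : (2 : R) ≠ 0)
    {α β γ δ D : R}
    (h : ∀ s t : R, (s * β + t * δ) ^ 3 - 2 * (s * α + t * γ) ^ 2 * (s * β + t * δ)
      = D * s ^ 2 * t) : D = 0 := by
  have hs3 : β * (β ^ 2 - 2 * α ^ 2) = 0 := by linear_combination h 1 0
  have ht3 : δ * (δ ^ 2 - 2 * γ ^ 2) = 0 := by linear_combination h 0 1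
  have hs2t : 3 * β ^ 2 * δ - 2 * α ^ 2 * δ - 4 * α * β * γ = D := by
    apply mul_left_cancel₀ h2
    linear_combination h 1 1 - h 1 (-1) - 2 * h 0 1
  have hst2 : 3 * β * δ ^ 2 - 2 * β * γ ^ 2 - 4 * α * γ * δ = 0 := by
    apply mul_left_cancel₀ h2
    linear_combination h 1 1 + h 1 (-1) - 2 * h 1 0
  rcases eq_or_ne δ 0 with hδ | hδ
  · have hβγ : β * γ ^ 2 = 0 := by
      apply mul_left_cancel₀ h2
      linear_combination -hst2 + (3 * β * δ - 4 * α * γ) * hδ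
    have hDγ : D * γ = 0 := by
      linear_combination -γ * hs2t - 4 * α * hβγ + (3 * β ^ 2 * γ - 2 * α ^ 2 * γ) * hδ
    rcases mul_eq_zero.1 hDγ with hD | hγ
    · exact hD
    linear_combination -hs2t + (3 * β ^ 2 - 2 * α ^ 2) * hδ - 4 * α * β * hγ
  · have hδγ : δ ^ 2 = 2 * γ ^ 2 := by
      linear_combination (mul_eq_zero.1 ht3).resolve_left hδ
    have hβδ : β * δ = 2 * α * γ := by
      refine mul_left_cancel₀ (mul_ne_zero h2 hδ) ?_
      linear_combination hst2 - β * hδγ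
    have hDβ : D * β = 0 := by
      linear_combination -β * hs2t + δ * hs3 + 2 * β ^ 2 * hβδ
    rcases mul_eq_zero.1 hDβ with hD | hβ
    · exact hD
    have hγ : γ ≠ 0 := by
      rintro rfl
      exact hδ (pow_eq_zero_iff two_ne_zero |>.1 (by linear_combination hδγ))
    have hα : α = 0 := by
      refine (mul_eq_zero.1 ?_).resolve_right hγ
      apply mul_left_cancel₀ h2
      linear_combination -hβδ + δ * hβ
    linear_combination -hs2t + (3 * β * δ - 4 * α * γ) * hβ - 2 * α * δ * hα

lemma det_eq_zero_of_quadCoords {R : Type*} [CommRing R] [IsDomain R] (h2 : (2 : R) ≠ 0)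
    {c : Matrix (Fin 3) (Fin 3) R} (h₁ : quadCoords (c 0) (c 1) = quadCoords (c 2) (c 0))
    (h₂ : quadCoords (c 1) (c 1) + quadCoords (c 2) (c 2) = 0) : c.det = 0 := by
  obtain ⟨α, β, hA⟩ := transpose_mul_gramA_mul_mem_pencil h₁
  obtain ⟨γ, δ, hB⟩ := transpose_mul_gramB_mul_mem_pencil h2 h₂
  have hcubic (s t : R) : (s * β + t * δ) ^ 3 - 2 * (s * α + t * γ) ^ 2 * (s * β + t * δ) =
      (-2 * c.det ^ 2) * s ^ 2 * t := by
    have hst : cᵀ * (s • gramA + t • gramB) * c =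
        (s * α + t * γ) • gramA + (s * β + t * δ) • 1 := by
      rw [Matrix.mul_add, Matrix.add_mul, Matrix.mul_smul, Matrix.smul_mul, Matrix.mul_smul,
        Matrix.smul_mul, hA, hB]
      module
    have hdet := congrArg det hst
    rw [det_mul, det_mul, det_transpose, det_smul_gramA_add_smul_gramB,
      det_smul_gramA_add_smul_one] at hdet
    linear_combination -hdet
  have hD := eq_zero_of_cubic_comp_eq h2 hcubic
  exact pow_eq_zero_iff two_ne_zero |>.1 ((mul_eq_zero.1 hD).resolve_left (neg_ne_zero.2 h2))

theorem stmt4_general (k : Type) [Field k] (hchar : ringChar k ≠ 2) :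
    ¬ GradedIso k (Urel k) (U'rel k) := by
  rintro ⟨φ, hφ⟩
  obtain ⟨c, hc, hdet⟩ :=
    exists_coeffMatrix_of_map_genSpan φ hφ linearCombination_gen_U'rel_injective
  have h₁ := congrArg φ gen_Urel_zero_mul_one
  have h₂ := congrArg φ gen_Urel_one_sq_add_two_sq
  simp only [map_mul, map_add, map_zero, hc, sq] at h₁ h₂
  exact hdet (det_eq_zero_of_quadCoords (Ring.two_ne_zero hchar) (quadCoords_eq_of_mul_eq h₁)
    (quadCoords_add_eq_zero h₂))

theorem stmt4 (k : Type) [Field k] [IsAlgClosed k] (hchar : ringChar k ≠ 2) :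
    ¬ GradedIso k (Urel k) (U'rel k) :=
  stmt4_general k hchar
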